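/- Under the combined hypotheses: X_i (i ∈ R, |R| ≥ 2) are pairwise independent real random variables with finite variance and pairwise distinct means μ_i, and C = min_{i≠j} (μ_i - μ_j)² > 0. Define the expected binary error E_bin = (1/(|R|(|R|-1))) Σ_{i≠j} P(sign(X_i - X_j) ≠ sign(μ_i - μ_j)). Then E_bin ≤ (2/(C|R|)) Σ_{i∈R} Var[X_i]. -/

import Mathlib

/-!
If `X` and `Y` are independent, then `X - Y` has mean `m = 𝔼X - 𝔼Y` and variance
`Var X + Var Y`, and `X - Y` can only have a sign different from that of `m` by deviating from
its mean by at least `|m|`. Chebyshev's inequality therefore bounds each pairwise error by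
`(Var X_i + Var X_j) / C`, and summing over the ordered pairs counts every variance
`2 (|R| - 1)` times.
-/

open MeasureTheory ProbabilityTheory Finset

theorem mul_nonpos_of_sign_ne {x y : ℝ} (h : Real.sign x ≠ Real.sign y) : x * y ≤ 0 := by
  by_contra! hxy
  rcases pos_and_pos_or_neg_and_neg_of_mul_pos hxy with ⟨hx, hy⟩ | ⟨hx, hy⟩
  · exact h (by rw [Real.sign_of_pos hx, Real.sign_of_pos hy])
  · exact h (by rw [Real.sign_of_neg hx, Real.sign_of_neg hy])

theorem abs_le_abs_sub_of_mul_nonpos {x m : ℝ} (h : x * m ≤ 0) : |m| ≤ |x - m| :=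
  sq_le_sq.mp (by nlinarith)

theorem Finset.sum_sum_erase_add {ι R : Type*} [DecidableEq ι] [CommRing R]
    (s : Finset ι) (f : ι → R) :
    ∑ i ∈ s, ∑ j ∈ s.erase i, (f i + f j) = 2 * ((#s : R) - 1) * ∑ i ∈ s, f i := by
  have inner : ∀ i ∈ s, ∑ j ∈ s.erase i, (f i + f j) = #s * f i + ∑ j ∈ s, f j - 2 * f i := by
    intro i hi
    rw [sum_erase_eq_sub hi, sum_add_distrib, sum_const, nsmul_eq_mul]
    ring
  rw [sum_congr rfl inner, sum_sub_distrib, sum_add_distrib, ← mul_sum, ← mul_sum, sum_const,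
    nsmul_eq_mul]
  ring

namespace ProbabilityTheory

variable {Ω : Type*} [MeasurableSpace Ω] {μ : Measure Ω} [IsFiniteMeasure μ]

theorem measure_sign_ne_sign_integral_le {D : Ω → ℝ} (hD : MemLp D 2 μ) (hm : μ[D] ≠ 0) :
    (μ {ω | Real.sign (D ω) ≠ Real.sign μ[D]}).toReal ≤ Var[D; μ] / μ[D] ^ 2 := by
  have hsub : {ω | Real.sign (D ω) ≠ Real.sign μ[D]} ⊆ {ω | |μ[D]| ≤ |D ω - μ[D]|} :=
    fun ω hω ↦ abs_le_abs_sub_of_mul_nonpos (mul_nonpos_of_sign_ne hω)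
  have hcheb := (measure_mono hsub).trans (meas_ge_le_variance_div_sq hD (abs_pos.mpr hm))
  rw [sq_abs] at hcheb
  exact ENNReal.toReal_le_of_le_ofReal (div_nonneg (variance_nonneg _ _) (sq_nonneg _)) hcheb

theorem IndepFun.variance_sub {X Y : Ω → ℝ} (hX : MemLp X 2 μ) (hY : MemLp Y 2 μ)
    (h : IndepFun X Y μ) : Var[X - Y; μ] = Var[X; μ] + Var[Y; μ] := by
  rw [ProbabilityTheory.variance_sub hX hY, h.covariance_eq_zero hX hY]
  ring

theorem IndepFun.measure_sign_sub_ne_le {X Y : Ω → ℝ} (hX : MemLp X 2 μ)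
    (hY : MemLp Y 2 μ) (h : IndepFun X Y μ) {C : ℝ} (hC : 0 < C) (hCm : C ≤ (μ[X] - μ[Y]) ^ 2) :
    (μ {ω | Real.sign (X ω - Y ω) ≠ Real.sign (μ[X] - μ[Y])}).toReal
      ≤ (Var[X; μ] + Var[Y; μ]) / C := by
  have hmean : μ[X - Y] = μ[X] - μ[Y] :=
    integral_sub (hX.integrable one_le_two) (hY.integrable one_le_two)
  have hm : μ[X - Y] ≠ 0 := hmean ▸ sq_pos_iff.mp (hC.trans_le hCm)
  have hbound := measure_sign_ne_sign_integral_le (hX.sub hY) hm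
  rw [hmean, h.variance_sub hX hY] at hbound
  exact hbound.trans (div_le_div_of_nonneg_left
    (add_nonneg (variance_nonneg _ _) (variance_nonneg _ _)) hC hCm)

end ProbabilityTheory

theorem stmt_3_general {Ω ι : Type*} [DecidableEq ι] [MeasureSpace Ω]
    [IsProbabilityMeasure (ℙ : Measure Ω)]
    (R : Finset ι) (hR : 2 ≤ R.card)
    (X : ι → Ω → ℝ) (hX : ∀ i ∈ R, MemLp (X i) 2 ℙ)
    (hind : ∀ i ∈ R, ∀ j ∈ R, i ≠ j → IndepFun (X i) (X j) ℙ)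
    (μ : ι → ℝ) (hμ : ∀ i ∈ R, μ i = ∫ ω, X i ω)
    (C : ℝ) (hC : 0 < C)
    (hCmin : ∀ i ∈ R, ∀ j ∈ R, i ≠ j → C ≤ (μ i - μ j) ^ 2) :
    (1 / ((R.card : ℝ) * ((R.card : ℝ) - 1))) *
      ∑ i ∈ R, ∑ j ∈ R.erase i,
        (ℙ {ω | Real.sign (X i ω - X j ω) ≠ Real.sign (μ i - μ j)}).toReal
    ≤ (2 / (C * (R.card : ℝ))) * ∑ i ∈ R, variance (X i) ℙ := by
  have hn : (2 : ℝ) ≤ R.card := by exact_mod_cast hR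
  have hn1 : (R.card : ℝ) - 1 ≠ 0 := by linarith
  calc (1 / ((R.card : ℝ) * ((R.card : ℝ) - 1))) *
        ∑ i ∈ R, ∑ j ∈ R.erase i,
          (ℙ {ω | Real.sign (X i ω - X j ω) ≠ Real.sign (μ i - μ j)}).toReal
      ≤ (1 / ((R.card : ℝ) * ((R.card : ℝ) - 1))) *
          ∑ i ∈ R, ∑ j ∈ R.erase i, (variance (X i) ℙ + variance (X j) ℙ) / C := by
        refine mul_le_mul_of_nonneg_left
          (sum_le_sum fun i hi ↦ sum_le_sum fun j hj ↦ ?_) (by rw [one_div_nonneg]; nlinarith)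
        have hjR := mem_of_mem_erase hj
        have hij : i ≠ j := (ne_of_mem_erase hj).symm
        have hCij := hCmin i hi j hjR hij
        rw [hμ i hi, hμ j hjR] at hCij ⊢
        exact (hind i hi j hjR hij).measure_sign_sub_ne_le
          (hX i hi) (hX j hjR) hC hCij
    _ = (2 / (C * (R.card : ℝ))) * ∑ i ∈ R, variance (X i) ℙ := by
        simp only [← sum_div, sum_sum_erase_add]
        field_simp

theorem stmt_3 {Ω ι : Type*} [DecidableEq ι] [MeasureSpace Ω]
    [IsProbabilityMeasure (ℙ : Measure Ω)]
    (R : Finset ι) (hR : 2 ≤ R.card)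
    (X : ι → Ω → ℝ) (hX : ∀ i ∈ R, MemLp (X i) 2 ℙ)
    (hind : ∀ i ∈ R, ∀ j ∈ R, i ≠ j → IndepFun (X i) (X j) ℙ)
    (μ : ι → ℝ) (hμ : ∀ i ∈ R, μ i = ∫ ω, X i ω)
    (hdist : ∀ i ∈ R, ∀ j ∈ R, i ≠ j → μ i ≠ μ j)
    (C : ℝ) (hC : 0 < C)
    (hCmin : ∀ i ∈ R, ∀ j ∈ R, i ≠ j → C ≤ (μ i - μ j) ^ 2) :
    (1 / ((R.card : ℝ) * ((R.card : ℝ) - 1))) *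
      ∑ i ∈ R, ∑ j ∈ R.erase i,
        (ℙ {ω | Real.sign (X i ω - X j ω) ≠ Real.sign (μ i - μ j)}).toReal
    ≤ (2 / (C * (R.card : ℝ))) * ∑ i ∈ R, variance (X i) ℙ :=
  stmt_3_general R hR X hX hind μ hμ C hC hCmin
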